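/- For every integer n ≥ 1, (√3·6.75^n/(2√(πn)))·(1 − 7/(72n)) < C(3n, n) < (√3·6.75^n/(2√(πn)))·(1 − 7/(72n) + 1/(50n²)), where C(3n,n) denotes the binomial coefficient and 6.75 denotes the exact rational 27/4. -/

import Mathlib

/-- One step in the random Fibonacci tree; `true` means a right branch:
from the pair `(x, y)`, a right branch leads to `(y, x + y)` and a left
branch leads to `(y, |x - y|)`. -/
def fibStep (p : ℤ × ℤ) (b : Bool) : ℤ × ℤ :=
  if b then (p.2, p.1 + p.2) else (p.2, |p.1 - p.2|)

/-- `fibPairs w i = (g_i, g_{i+1})` for the walk determined by the branch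
sequence `w`, where `w j` is the `(j+1)`-st branch choice. -/
def fibPairs (w : ℕ → Bool) : ℕ → ℤ × ℤ
  | 0 => (1, 1)
  | i + 1 => fibStep (fibPairs w i) (w i)

/-- Extend a branch sequence of length `m` by dummy values. -/
def extendW {m : ℕ} (w : Fin m → Bool) : ℕ → Bool :=
  fun i => if h : i < m then w ⟨i, h⟩ else false

/-- The ending pair `(g_m, g_{m+1})` of the walk determined by a branch
sequence of length `m`. -/
def endPair {m : ℕ} (w : Fin m → Bool) : ℤ × ℤ := fibPairs (extendW w) m

/-- `A(n)`: the number of branch sequences of length `3n` whose walk has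
ending pair `(1,1)`. -/
noncomputable def A11 (n : ℕ) : ℕ :=
  Nat.card {w : Fin (3 * n) → Bool // endPair w = (1, 1)}

/-- `S(n)`: the number of branch sequences of length `3n` whose walk has ending
pair `(1,1)` and no index `1 ≤ i ≤ 3n - 1` with `(g_i, g_{i+1}) = (1,1)`. -/
noncomputable def Sprim (n : ℕ) : ℕ :=
  Nat.card {w : Fin (3 * n) → Bool //
    endPair w = (1, 1) ∧
    ∀ i, 1 ≤ i → i ≤ 3 * n - 1 → fibPairs (extendW w) i ≠ (1, 1)}

/-- `B(n)`: the number of branch sequences of length `3n` whose walk has ending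
pair `(1,1)` and satisfies `g_i ≠ 0` for all `0 ≤ i ≤ 3n + 1`. -/
noncomputable def Bnz (n : ℕ) : ℕ :=
  Nat.card {w : Fin (3 * n) → Bool //
    endPair w = (1, 1) ∧
    ∀ i, i ≤ 3 * n + 1 → (fibPairs (extendW w) i).1 ≠ 0}

/-- `m(a,b)`: `0` if `a, b` both odd, `1` if `a` odd and `b` even,
`2` if `a` even (and `b` odd). -/
def pairOffset (a b : ℕ) : ℕ :=
  if Odd a then (if Odd b then 0 else 1) else 2

/-- `A_{(a,b)}(n)`: the number of branch sequences of length `3n + m(a,b)`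
whose walk has ending pair `(a, b)`. -/
noncomputable def Aab (a b : ℕ) (n : ℕ) : ℕ :=
  Nat.card {w : Fin (3 * n + pairOffset a b) → Bool //
    endPair w = ((a : ℤ), (b : ℤ))}

/-- `SW_{(1,1)}(a,b)`: the least `m` such that some branch sequence of
length `m` has walk with ending pair `(a, b)`. -/
noncomputable def SW (a b : ℕ) : ℕ :=
  sInf {m : ℕ | ∃ w : Fin m → Bool, endPair w = ((a : ℤ), (b : ℤ))}



section CentralTrinomial

open Real Filter Stirling Topology

noncomputable def Lq (n : ℕ) : ℝ :=
  Real.sqrt 3 * (27 / 4 : ℝ) ^ n / (2 * Real.sqrt (Real.pi * n)) * (1 - 7 / (72 * (n : ℝ)))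

noncomputable def Uq (n : ℕ) : ℝ :=
  Real.sqrt 3 * (27 / 4 : ℝ) ^ n / (2 * Real.sqrt (Real.pi * n))
    * (1 - 7 / (72 * (n : ℝ)) + 1 / (50 * (n : ℝ) ^ 2))



lemma fact_eq (n : ℕ) (hn : 1 ≤ n) :
    (Nat.factorial n : ℝ) = stirlingSeq n * (Real.sqrt (2 * n) * ((n : ℝ) / Real.exp 1) ^ n) := by
  have hn' : (0:ℝ) < n := by exact_mod_cast hn
  have h : Real.sqrt (2 * n) * ((n : ℝ) / Real.exp 1) ^ n ≠ 0 := by positivity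
  rw [stirlingSeq]
  field_simp

lemma Cform (n : ℕ) (hn : 1 ≤ n) :
    (Nat.choose (3 * n) n : ℝ) * (stirlingSeq n * stirlingSeq (2 * n)) * (2 * Real.sqrt n)
      = stirlingSeq (3 * n) * (Real.sqrt 3 * (27 / 4 : ℝ) ^ n) := by
  have hn' : (0:ℝ) < n := by exact_mod_cast hn
  have hfac : ((3*n).factorial : ℝ) = (Nat.choose (3*n) n : ℝ) * (Nat.factorial n) * (Nat.factorial (2*n)) := by
    have := Nat.choose_mul_factorial_mul_factorial (show n ≤ 3*n by omega)
    have h2 : 3*n - n = 2*n := by omega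
    rw [h2] at this
    exact_mod_cast this.symm
  set y : ℝ := (n : ℝ) / Real.exp 1 with hy
  have hyp : 0 < y := by positivity
  have e1 : ((3*n : ℕ) : ℝ) / Real.exp 1 = 3 * y := by push_cast [hy]; ring
  have e2 : ((2*n : ℕ) : ℝ) / Real.exp 1 = 2 * y := by push_cast [hy]; ring
  have p1 : (3 * y) ^ (3*n) = 27 ^ n * (y ^ n) ^ 3 := by
    rw [pow_mul, show (3*y)^3 = 27 * y^3 by ring, mul_pow, ← pow_mul, mul_comm 3 n, pow_mul]
  have p2 : (2 * y) ^ (2*n) = 4 ^ n * (y ^ n) ^ 2 := by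
    rw [pow_mul, show (2*y)^2 = 4 * y^2 by ring, mul_pow, ← pow_mul, mul_comm 2 n, pow_mul]
  have s1 : Real.sqrt (2 * ((3*n : ℕ) : ℝ)) = Real.sqrt 2 * Real.sqrt 3 * Real.sqrt n := by
    push_cast
    rw [show (2 : ℝ) * (3 * n) = 2 * 3 * n by ring, Real.sqrt_mul (by norm_num),
      Real.sqrt_mul (by norm_num)]
  have s2 : Real.sqrt (2 * ((2*n : ℕ) : ℝ)) = 2 * Real.sqrt n := by
    push_cast
    rw [show (2 : ℝ) * (2 * n) = 4 * n by ring, Real.sqrt_mul (by norm_num),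
      show Real.sqrt 4 = 2 by rw [show (4:ℝ) = 2^2 by norm_num, Real.sqrt_sq (by norm_num)]]
  have E := fact_eq (3*n) (by omega)
  rw [hfac, fact_eq n hn, fact_eq (2*n) (by omega), e1, e2, s1, s2, p1, p2, ← hy] at E
  -- E : s3 * (√2√3√n * (27^n y^n (y^n)^2)) = C * (s1 * (√(2n) y^n)) * (s2 * (2√n * 4^n (y^n)^2))
  have hF : Real.sqrt 2 * Real.sqrt n * y ^ n * (y^n)^2 * 4 ^ n ≠ 0 := by positivity
  apply mul_right_cancel₀ hF
  have h27 : ((27:ℝ)/4)^n = 27^n / 4^n := div_pow _ _ _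
  have h4 : (4:ℝ)^n ≠ 0 := by positivity
  rw [h27]
  rw [Real.sqrt_mul (by norm_num : (0:ℝ) ≤ 2)] at E
  linear_combination E - stirlingSeq (3*n) * Real.sqrt 3 * Real.sqrt 2 * Real.sqrt n * y^n * (y^n)^2 * div_mul_cancel₀ ((27:ℝ)^n) h4



lemma ratio_id (n : ℕ) :
    (((n:ℝ)+1)*(2*n+1)*(2*n+2)) * (Nat.choose (3*(n+1)) (n+1) : ℝ)
      = ((3*(n:ℝ)+1)*(3*n+2)*(3*n+3)) * (Nat.choose (3*n) n : ℝ) := by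
  have h1 := Nat.choose_mul_factorial_mul_factorial (show n ≤ 3*n by omega)
  have h2 := Nat.choose_mul_factorial_mul_factorial (show n+1 ≤ 3*(n+1) by omega)
  have e1 : 3*n - n = 2*n := by omega
  have e2 : 3*(n+1) - (n+1) = 2*n+2 := by omega
  rw [e1] at h1; rw [e2] at h2
  have c1 : (Nat.choose (3*n) n : ℝ) * (Nat.factorial n) * (Nat.factorial (2*n))
      = (Nat.factorial (3*n)) := by exact_mod_cast h1
  have c2 : (Nat.choose (3*(n+1)) (n+1) : ℝ) * (Nat.factorial (n+1)) * (Nat.factorial (2*n+2))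
      = (Nat.factorial (3*(n+1))) := by exact_mod_cast h2
  have f1 : (Nat.factorial (n+1) : ℝ) = ((n:ℝ)+1) * (Nat.factorial n) := by
    rw [Nat.factorial_succ]; push_cast; ring
  have f2 : (Nat.factorial (2*n+2) : ℝ) = (2*(n:ℝ)+2)*(2*n+1) * (Nat.factorial (2*n)) := by
    rw [show 2*n+2 = (2*n+1)+1 by ring, Nat.factorial_succ, Nat.factorial_succ]
    push_cast; ring
  have f3 : (Nat.factorial (3*(n+1)) : ℝ) = (3*(n:ℝ)+3)*(3*n+2)*(3*n+1) * (Nat.factorial (3*n)) := by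
    rw [show 3*(n+1) = (3*n+2)+1 by ring, Nat.factorial_succ,
      show 3*n+2 = (3*n+1)+1 by ring, Nat.factorial_succ,
      show 3*n+1 = (3*n)+1 by ring, Nat.factorial_succ]
    push_cast; ring
  rw [f1, f2, f3] at c2
  have hb : (Nat.factorial n : ℝ) ≠ 0 := by positivity
  have hc : (Nat.factorial (2*n) : ℝ) ≠ 0 := by positivity
  apply mul_right_cancel₀ (mul_ne_zero hb hc)
  linear_combination c2 - ((3*(n:ℝ)+1)*(3*n+2)*(3*n+3)) * c1

lemma sq_lt_imp {a b : ℝ} (hb : 0 ≤ b) (h : a^2 < b^2) : a < b := by nlinarith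

lemma core_low (n : ℕ) (hn : 1 ≤ n) :
    (72*(n:ℝ)-7) * (72*((n:ℝ)+1)) * ((3*(n:ℝ)+1)*(3*(n:ℝ)+2)*(3*(n:ℝ)+3)) * Real.sqrt ((n:ℝ)+1)
      < (27/4) * (72*(n:ℝ)) * (72*((n:ℝ)+1)-7) * (((n:ℝ)+1)*(2*(n:ℝ)+1)*(2*(n:ℝ)+2)) * Real.sqrt n := by
  have hx1 : (1:ℝ) ≤ (n:ℝ) := Nat.one_le_cast.mpr hn
  apply sq_lt_imp
  · refine mul_nonneg (mul_nonneg (mul_nonneg (mul_nonneg (by norm_num) (by linarith))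
      (by linarith)) (by positivity)) (Real.sqrt_nonneg _)
  · simp only [mul_pow]
    rw [Real.sq_sqrt (by linarith : (0:ℝ) ≤ (n:ℝ)+1), Real.sq_sqrt (by linarith : (0:ℝ) ≤ (n:ℝ))]
    nlinarith [one_le_pow₀ (n := 2) hx1, one_le_pow₀ (n := 3) hx1, one_le_pow₀ (n := 4) hx1,
      one_le_pow₀ (n := 5) hx1, one_le_pow₀ (n := 6) hx1, one_le_pow₀ (n := 7) hx1,
      one_le_pow₀ (n := 8) hx1]

lemma core_up (n : ℕ) (hn : 1 ≤ n) :
    (27/4) * (3600*(n:ℝ)^2) * (3600*((n:ℝ)+1)^2 - 350*((n:ℝ)+1) + 72)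
        * (((n:ℝ)+1)*(2*(n:ℝ)+1)*(2*(n:ℝ)+2)) * Real.sqrt n
      < (3600*(n:ℝ)^2 - 350*(n:ℝ) + 72) * (3600*((n:ℝ)+1)^2)
        * ((3*(n:ℝ)+1)*(3*(n:ℝ)+2)*(3*(n:ℝ)+3)) * Real.sqrt ((n:ℝ)+1) := by
  have hx1 : (1:ℝ) ≤ (n:ℝ) := Nat.one_le_cast.mpr hn
  have hu : (0:ℝ) < 3600*(n:ℝ)^2 - 350*(n:ℝ) + 72 := by nlinarith
  apply sq_lt_imp
  · refine mul_nonneg (mul_nonneg (mul_nonneg (le_of_lt hu) (by positivity)) (by positivity))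
      (Real.sqrt_nonneg _)
  · simp only [mul_pow]
    rw [Real.sq_sqrt (by linarith : (0:ℝ) ≤ (n:ℝ)+1), Real.sq_sqrt (by linarith : (0:ℝ) ≤ (n:ℝ))]
    nlinarith [one_le_pow₀ (n := 2) hx1, one_le_pow₀ (n := 3) hx1, one_le_pow₀ (n := 4) hx1,
      one_le_pow₀ (n := 5) hx1, one_le_pow₀ (n := 6) hx1, one_le_pow₀ (n := 7) hx1,
      one_le_pow₀ (n := 8) hx1, one_le_pow₀ (n := 9) hx1, one_le_pow₀ (n := 10) hx1,
      one_le_pow₀ (n := 11) hx1, one_le_pow₀ (n := 12) hx1]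



lemma stepL (n : ℕ) (hn : 1 ≤ n) :
    Lq n * ((3*(n:ℝ)+1)*(3*(n:ℝ)+2)*(3*(n:ℝ)+3))
      < Lq (n+1) * (((n:ℝ)+1)*(2*(n:ℝ)+1)*(2*(n:ℝ)+2)) := by
  have hx1 : (1:ℝ) ≤ (n:ℝ) := Nat.one_le_cast.mpr hn
  have hx0 : (0:ℝ) < (n:ℝ) := by linarith
  have hπ : (0:ℝ) < Real.sqrt π := Real.sqrt_pos.mpr Real.pi_pos
  have hsn : (0:ℝ) < Real.sqrt n := Real.sqrt_pos.mpr hx0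
  have hsn1 : (0:ℝ) < Real.sqrt ((n:ℝ)+1) := Real.sqrt_pos.mpr (by linarith)
  set c0 : ℝ := Real.sqrt 3 * (27/4)^n /
    (2 * Real.sqrt π * Real.sqrt n * Real.sqrt ((n:ℝ)+1) * (72*(n:ℝ)) * (72*((n:ℝ)+1))) with hc0def
  have hc0 : 0 < c0 := by
    rw [hc0def]
    have h3 : (0:ℝ) < Real.sqrt 3 := Real.sqrt_pos.mpr (by norm_num)
    positivity
  have e1 : Lq n * ((3*(n:ℝ)+1)*(3*(n:ℝ)+2)*(3*(n:ℝ)+3))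
      = c0 * ((72*(n:ℝ)-7) * (72*((n:ℝ)+1)) * ((3*(n:ℝ)+1)*(3*(n:ℝ)+2)*(3*(n:ℝ)+3))
          * Real.sqrt ((n:ℝ)+1)) := by
    rw [Lq, hc0def, Real.sqrt_mul Real.pi_nonneg]
    field_simp
  have e2 : Lq (n+1) * (((n:ℝ)+1)*(2*(n:ℝ)+1)*(2*(n:ℝ)+2))
      = c0 * ((27/4) * (72*(n:ℝ)) * (72*((n:ℝ)+1)-7) * (((n:ℝ)+1)*(2*(n:ℝ)+1)*(2*(n:ℝ)+2))
          * Real.sqrt n) := by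
    rw [Lq, hc0def, pow_succ]
    push_cast
    rw [Real.sqrt_mul Real.pi_nonneg]
    field_simp
  rw [e1, e2]
  exact mul_lt_mul_of_pos_left (core_low n hn) hc0



lemma stepU (n : ℕ) (hn : 1 ≤ n) :
    Uq (n+1) * (((n:ℝ)+1)*(2*(n:ℝ)+1)*(2*(n:ℝ)+2))
      < Uq n * ((3*(n:ℝ)+1)*(3*(n:ℝ)+2)*(3*(n:ℝ)+3)) := by
  have hx1 : (1:ℝ) ≤ (n:ℝ) := Nat.one_le_cast.mpr hn
  have hx0 : (0:ℝ) < (n:ℝ) := by linarith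
  have hπ : (0:ℝ) < Real.sqrt π := Real.sqrt_pos.mpr Real.pi_pos
  have hsn : (0:ℝ) < Real.sqrt n := Real.sqrt_pos.mpr hx0
  have hsn1 : (0:ℝ) < Real.sqrt ((n:ℝ)+1) := Real.sqrt_pos.mpr (by linarith)
  set c0 : ℝ := Real.sqrt 3 * (27/4)^n /
    (2 * Real.sqrt π * Real.sqrt n * Real.sqrt ((n:ℝ)+1) * (3600*(n:ℝ)^2) * (3600*((n:ℝ)+1)^2))
    with hc0def
  have hc0 : 0 < c0 := by
    rw [hc0def]
    have h3 : (0:ℝ) < Real.sqrt 3 := Real.sqrt_pos.mpr (by norm_num)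
    positivity
  have e1 : Uq n * ((3*(n:ℝ)+1)*(3*(n:ℝ)+2)*(3*(n:ℝ)+3))
      = c0 * ((3600*(n:ℝ)^2 - 350*(n:ℝ) + 72) * (3600*((n:ℝ)+1)^2)
          * ((3*(n:ℝ)+1)*(3*(n:ℝ)+2)*(3*(n:ℝ)+3)) * Real.sqrt ((n:ℝ)+1)) := by
    rw [Uq, hc0def, Real.sqrt_mul Real.pi_nonneg]
    field_simp
    ring
  have e2 : Uq (n+1) * (((n:ℝ)+1)*(2*(n:ℝ)+1)*(2*(n:ℝ)+2))
      = c0 * ((27/4) * (3600*(n:ℝ)^2) * (3600*((n:ℝ)+1)^2 - 350*((n:ℝ)+1) + 72)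
          * (((n:ℝ)+1)*(2*(n:ℝ)+1)*(2*(n:ℝ)+2)) * Real.sqrt n) := by
    rw [Uq, hc0def, pow_succ]
    push_cast
    rw [Real.sqrt_mul Real.pi_nonneg]
    field_simp
    ring
  rw [e1, e2]
  exact mul_lt_mul_of_pos_left (core_up n hn) hc0



noncomputable def corr (n : ℕ) : ℝ :=
  stirlingSeq n * stirlingSeq (2*n) / (stirlingSeq (3*n) * Real.sqrt π)

lemma spos (m : ℕ) (hm : 1 ≤ m) : 0 < stirlingSeq m := by
  obtain ⟨k, rfl⟩ : ∃ k, m = k + 1 := ⟨m - 1, by omega⟩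
  exact stirlingSeq'_pos k

lemma tendsto_corr : Tendsto corr atTop (𝓝 1) := by
  have h1 := tendsto_stirlingSeq_sqrt_pi
  have h2 : Tendsto (fun n => stirlingSeq (2*n)) atTop (𝓝 (Real.sqrt π)) :=
    h1.comp (tendsto_atTop_mono (f := id) (fun n => by simp only [id]; omega) tendsto_id)
  have h3 : Tendsto (fun n => stirlingSeq (3*n)) atTop (𝓝 (Real.sqrt π)) :=
    h1.comp (tendsto_atTop_mono (f := id) (fun n => by simp only [id]; omega) tendsto_id)
  have hne : Real.sqrt π * Real.sqrt π ≠ 0 := by positivity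
  have := (h1.mul h2).div (h3.mul tendsto_const_nhds) hne
  have heq : (Real.sqrt π * Real.sqrt π) / (Real.sqrt π * Real.sqrt π) = 1 :=
    div_self hne
  rw [heq] at this
  exact this

lemma tendsto_inv_nat : Tendsto (fun n : ℕ => 1/(n:ℝ)) atTop (𝓝 0) :=
  tendsto_one_div_atTop_nhds_zero_nat

lemma tendsto_lcorr : Tendsto (fun n : ℕ => 1 - 7 / (72 * (n:ℝ))) atTop (𝓝 1) := by
  have h : Tendsto (fun n : ℕ => 7 / (72 * (n:ℝ))) atTop (𝓝 0) := by
    have := tendsto_inv_nat.const_mul (7/72 : ℝ)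
    rw [mul_zero] at this
    exact this.congr (fun n => by ring)
  have h2 := (tendsto_const_nhds (x := (1:ℝ)) (f := (atTop : Filter ℕ))).sub h
  rw [sub_zero] at h2
  exact h2

lemma tendsto_ucorr :
    Tendsto (fun n : ℕ => 1 - 7 / (72 * (n:ℝ)) + 1 / (50 * (n:ℝ)^2)) atTop (𝓝 1) := by
  have h : Tendsto (fun n : ℕ => 1 / (50 * (n:ℝ)^2)) atTop (𝓝 0) := by
    have h0 := ((tendsto_inv_nat.mul tendsto_inv_nat).const_mul (1/50 : ℝ))
    simp only [mul_zero] at h0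
    exact h0.congr (fun n => by ring)
  have := tendsto_lcorr.add h
  rw [add_zero] at this
  exact this

lemma LqC (n : ℕ) (hn : 1 ≤ n) :
    Lq n / (Nat.choose (3*n) n : ℝ) = corr n * (1 - 7 / (72 * (n:ℝ))) := by
  have hx1 : (1:ℝ) ≤ (n:ℝ) := Nat.one_le_cast.mpr hn
  have hx0 : (0:ℝ) < (n:ℝ) := by linarith
  have hC : (0:ℝ) < (Nat.choose (3*n) n : ℝ) :=
    Nat.cast_pos.mpr (Nat.choose_pos (by omega))
  have hπ : (0:ℝ) < Real.sqrt π := Real.sqrt_pos.mpr Real.pi_pos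
  have hsn : (0:ℝ) < Real.sqrt n := Real.sqrt_pos.mpr hx0
  have h1 := spos n hn
  have h2 := spos (2*n) (by omega)
  have h3 := spos (3*n) (by omega)
  have key := Cform n hn
  have hcc : corr n * (Nat.choose (3*n) n : ℝ)
      = Real.sqrt 3 * (27/4:ℝ)^n / (2 * Real.sqrt π * Real.sqrt n) := by
    rw [corr, div_mul_eq_mul_div, div_eq_div_iff (by positivity) (by positivity)]
    linear_combination Real.sqrt π * key
  have hcorr : corr n = Real.sqrt 3 * (27/4:ℝ)^n / (2 * Real.sqrt π * Real.sqrt n)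
      / (Nat.choose (3*n) n : ℝ) := by
    rw [eq_div_iff hC.ne']; exact hcc
  rw [Lq, Real.sqrt_mul Real.pi_nonneg, hcorr]
  ring

lemma UqC (n : ℕ) (hn : 1 ≤ n) :
    Uq n / (Nat.choose (3*n) n : ℝ)
      = corr n * (1 - 7 / (72 * (n:ℝ)) + 1 / (50 * (n:ℝ)^2)) := by
  have hx1 : (1:ℝ) ≤ (n:ℝ) := Nat.one_le_cast.mpr hn
  have hx0 : (0:ℝ) < (n:ℝ) := by linarith
  have hC : (0:ℝ) < (Nat.choose (3*n) n : ℝ) :=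
    Nat.cast_pos.mpr (Nat.choose_pos (by omega))
  have hπ : (0:ℝ) < Real.sqrt π := Real.sqrt_pos.mpr Real.pi_pos
  have hsn : (0:ℝ) < Real.sqrt n := Real.sqrt_pos.mpr hx0
  have h1 := spos n hn
  have h2 := spos (2*n) (by omega)
  have h3 := spos (3*n) (by omega)
  have key := Cform n hn
  have hcc : corr n * (Nat.choose (3*n) n : ℝ)
      = Real.sqrt 3 * (27/4:ℝ)^n / (2 * Real.sqrt π * Real.sqrt n) := by
    rw [corr, div_mul_eq_mul_div, div_eq_div_iff (by positivity) (by positivity)]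
    linear_combination Real.sqrt π * key
  have hcorr : corr n = Real.sqrt 3 * (27/4:ℝ)^n / (2 * Real.sqrt π * Real.sqrt n)
      / (Nat.choose (3*n) n : ℝ) := by
    rw [eq_div_iff hC.ne']; exact hcc
  rw [Uq, Real.sqrt_mul Real.pi_nonneg, hcorr]
  ring

lemma tendsto_LqC :
    Tendsto (fun n : ℕ => Lq n / (Nat.choose (3*n) n : ℝ)) atTop (𝓝 1) := by
  have h := tendsto_corr.mul tendsto_lcorr
  rw [mul_one] at h
  apply h.congr'
  filter_upwards [eventually_ge_atTop 1] with n hn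
  exact (LqC n hn).symm

lemma tendsto_UqC :
    Tendsto (fun n : ℕ => Uq n / (Nat.choose (3*n) n : ℝ)) atTop (𝓝 1) := by
  have h := tendsto_corr.mul tendsto_ucorr
  rw [mul_one] at h
  apply h.congr'
  filter_upwards [eventually_ge_atTop 1] with n hn
  exact (UqC n hn).symm



lemma choose_pos' (n : ℕ) : (0:ℝ) < (Nat.choose (3*n) n : ℝ) :=
  Nat.cast_pos.mpr (Nat.choose_pos (by omega))

lemma Dpos (n : ℕ) : (0:ℝ) < ((n:ℝ)+1)*(2*(n:ℝ)+1)*(2*(n:ℝ)+2) := by positivity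
lemma Npos (n : ℕ) : (0:ℝ) < (3*(n:ℝ)+1)*(3*(n:ℝ)+2)*(3*(n:ℝ)+3) := by positivity

lemma fstep_L (k : ℕ) :
    Lq (k+1) / (Nat.choose (3*(k+1)) (k+1) : ℝ)
      < Lq (k+1+1) / (Nat.choose (3*(k+1+1)) (k+1+1) : ℝ) := by
  have hC1 := choose_pos' (k+1)
  have hC2 := choose_pos' (k+1+1)
  rw [div_lt_div_iff₀ hC1 hC2]
  have hD := Dpos (k+1)
  rw [← mul_lt_mul_iff_of_pos_right hD]
  have hs := stepL (k+1) (by omega)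
  have hr := ratio_id (k+1)
  have h1 := mul_lt_mul_of_pos_right hs hC1
  have h2 := congrArg (fun t => Lq (k+1) * t) hr
  push_cast at hr h1 hD hs h2 ⊢
  nlinarith [h1, hr, h2, hC1, mul_pos hC1 hD]

lemma fstep_U (k : ℕ) :
    Uq (k+1+1) / (Nat.choose (3*(k+1+1)) (k+1+1) : ℝ)
      < Uq (k+1) / (Nat.choose (3*(k+1)) (k+1) : ℝ) := by
  have hC1 := choose_pos' (k+1)
  have hC2 := choose_pos' (k+1+1)
  rw [div_lt_div_iff₀ hC2 hC1]
  have hD := Dpos (k+1)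
  rw [← mul_lt_mul_iff_of_pos_right hD]
  have hs := stepU (k+1) (by omega)
  have hr := ratio_id (k+1)
  have h1 := mul_lt_mul_of_pos_right hs hC1
  have h2 := congrArg (fun t => Uq (k+1) * t) hr
  push_cast at hr h1 hD hs h2 ⊢
  nlinarith [h1, hr, h2, hC1, mul_pos hC1 hD]

lemma lower_bound (n : ℕ) (hn : 1 ≤ n) : Lq n < (Nat.choose (3*n) n : ℝ) := by
  set f : ℕ → ℝ := fun m => Lq (m+1) / (Nat.choose (3*(m+1)) (m+1) : ℝ) with hf
  have hmono : StrictMono f := strictMono_nat_of_lt_succ (fun k => fstep_L k)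
  have htend : Tendsto f atTop (𝓝 1) :=
    tendsto_LqC.comp (tendsto_add_atTop_nat 1)
  have hle : ∀ m, f m ≤ 1 := fun m => hmono.monotone.ge_of_tendsto htend m
  obtain ⟨m, rfl⟩ : ∃ m, n = m + 1 := ⟨n - 1, by omega⟩
  have : f m < 1 := lt_of_lt_of_le (hmono (lt_add_one m)) (hle (m+1))
  have hC := choose_pos' (m+1)
  rw [hf] at this
  simpa using (div_lt_one hC).mp this

lemma upper_bound (n : ℕ) (hn : 1 ≤ n) : (Nat.choose (3*n) n : ℝ) < Uq n := by
  set f : ℕ → ℝ := fun m => Uq (m+1) / (Nat.choose (3*(m+1)) (m+1) : ℝ) with hf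
  have hmono : StrictAnti f := strictAnti_nat_of_succ_lt (fun k => fstep_U k)
  have htend : Tendsto f atTop (𝓝 1) :=
    tendsto_UqC.comp (tendsto_add_atTop_nat 1)
  have hge : ∀ m, 1 ≤ f m := fun m => hmono.antitone.le_of_tendsto htend m
  obtain ⟨m, rfl⟩ : ∃ m, n = m + 1 := ⟨n - 1, by omega⟩
  have : 1 < f m := lt_of_le_of_lt (hge (m+1)) (hmono (lt_add_one m))
  have hC := choose_pos' (m+1)
  rw [hf] at this
  simpa using (one_lt_div hC).mp this

end CentralTrinomial

/-- For every `n ≥ 1`,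
`(√3·6.75ⁿ/(2√(πn)))·(1 − 7/(72n)) < C(3n, n)
  < (√3·6.75ⁿ/(2√(πn)))·(1 − 7/(72n) + 1/(50n²))`. -/
theorem central_trinomial_bounds (n : ℕ) (hn : 1 ≤ n) :
    (Real.sqrt 3 * (27 / 4 : ℝ) ^ n / (2 * Real.sqrt (Real.pi * n)))
        * (1 - 7 / (72 * (n : ℝ))) < (Nat.choose (3 * n) n : ℝ) ∧
    (Nat.choose (3 * n) n : ℝ) <
      (Real.sqrt 3 * (27 / 4 : ℝ) ^ n / (2 * Real.sqrt (Real.pi * n)))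
        * (1 - 7 / (72 * (n : ℝ)) + 1 / (50 * (n : ℝ) ^ 2)) := by
  exact ⟨lower_bound n hn, upper_bound n hn⟩
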